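/- There exists an integer ℓ₀ ≥ 1 such that for every integer ℓ ≥ ℓ₀ and every integer j with 0 ≤ j ≤ ℓ − 2: |μ_ℓ(j+2)|² ≤ e^{−2j/ℓ} |μ_ℓ(j)|², i.e. the coupled probabilities satisfy P_ℓ(j+2)/P_ℓ(j) ≤ e^{−2j/ℓ} ≤ 1 (whenever P_ℓ(j) > 0). -/

import Mathlib

open Complex Real

/-- The complex amplitude `μ_ℓ(j)`. -/
noncomputable def amp (ℓ : ℕ) (j : ℤ) : ℂ :=
  if j.natAbs ≤ ℓ then
    ∑ r ∈ Finset.range (ℓ - j.natAbs + 1),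
      if 2 ∣ ((ℓ : ℤ) - r + j) then
        (ℓ.choose r : ℂ) * ((ℓ - r).choose ((((ℓ : ℤ) - r + j) / 2).toNat) : ℂ) *
          (Complex.I / 2) ^ (ℓ - r) * (1 - Complex.I) ^ r
      else 0
  else 0

/-- The normalizing factor `Z_ℓ = Σ_{j=−ℓ}^{ℓ} |μ_ℓ(j)|²`. -/
noncomputable def Znorm (ℓ : ℕ) : ℝ :=
  ∑ j ∈ Finset.Icc (-(ℓ : ℤ)) (ℓ : ℤ), ‖amp ℓ j‖ ^ 2

/-- The coupled probabilities `P_ℓ(j) = |μ_ℓ(j)|²/Z_ℓ`. -/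
noncomputable def Pcoup (ℓ : ℕ) (j : ℤ) : ℝ := ‖amp ℓ j‖ ^ 2 / Znorm ℓ

/-!
For `m ≥ 0`, `μ_ℓ(m)` is the coefficient of `X^(ℓ+m)` in `Q^ℓ`, where `Q = (i/2)X² + (1−i)X + i/2`.
Comparing coefficients in `Q · (Q^ℓ)' = ℓ · Q' · Q^ℓ` gives the three-term recurrence
`(ℓ+m+2) μ(m+2) = (ℓ−m) μ(m) + (2+2i)(m+1) μ(m+1)`.
Multiplying it by `conj μ(m+1)` shows, by downward induction from `m = ℓ`, that the products
`z_m = conj μ(m) · μ(m+1)` stay in the cone `|Im z_m| ≤ −Re z_m`. Expanding `|(ℓ+j+2) μ(j+2)|²`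
with the recurrence then gives `(ℓ+j+2)² |μ(j+2)|² ≤ (ℓ−j)² |μ(j)|²`, and `ℓ − j ≤ ℓ e^(−j/ℓ)`.
-/

open Polynomial Finset ComplexConjugate

noncomputable def stepPoly : ℂ[X] := C (I / 2) * X ^ 2 + C (1 - I) * X + C (I / 2)

theorem coeff_X_sq_add_one_pow {R : Type*} [CommSemiring R] (n k : ℕ) :
    ((X ^ 2 + 1 : R[X]) ^ n).coeff k = if 2 ∣ k then (n.choose (k / 2) : R) else 0 := by
  have h : (X ^ 2 + 1 : R[X]) ^ n = expand R 2 ((X + 1) ^ n) := by simp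
  rw [h, coeff_expand two_pos, coeff_X_add_one_pow]

theorem coeff_stepPoly_pow (ℓ k : ℕ) (hk : ℓ ≤ k) :
    (stepPoly ^ ℓ).coeff k = ∑ r ∈ range (ℓ + 1),
      if 2 ∣ k - r then
        (ℓ.choose r : ℂ) * ((ℓ - r).choose ((k - r) / 2) : ℂ) * (I / 2) ^ (ℓ - r) * (1 - I) ^ r
      else 0 := by
  have hQ : stepPoly = C (1 - I) * X + C (I / 2) * (X ^ 2 + 1) := by rw [stepPoly]; ring
  rw [hQ, add_pow, finsetSum_coeff]
  refine sum_congr rfl fun r hr => ?_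
  have hterm : (C (1 - I) * X) ^ r * (C (I / 2) * (X ^ 2 + 1)) ^ (ℓ - r) * (ℓ.choose r : ℂ[X]) =
      C ((ℓ.choose r : ℂ) * (I / 2) ^ (ℓ - r) * (1 - I) ^ r) * (X ^ r * (X ^ 2 + 1) ^ (ℓ - r)) := by
    simp only [mul_pow, ← C_pow, C_mul, ← C_eq_natCast]; ring
  rw [hterm, coeff_C_mul, coeff_X_pow_mul', if_pos (by simp at hr; omega), coeff_X_sq_add_one_pow]
  split_ifs <;> ring

theorem amp_natCast (ℓ m : ℕ) : amp ℓ m = (stepPoly ^ ℓ).coeff (ℓ + m) := by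
  rcases le_or_gt m ℓ with hm | hm
  · rw [amp, if_pos (by simpa using hm), coeff_stepPoly_pow ℓ _ (by omega), Int.natAbs_natCast]
    refine sum_subset_zero_on_sdiff (range_subset_range.2 (by omega)) ?_ fun r hr => ?_
    · -- for `r > ℓ - m` the parity condition forces `(ℓ + m - r) / 2 > ℓ - r`
      intro r hr
      simp only [mem_sdiff, mem_range] at hr
      split_ifs with h
      · rw [Nat.choose_eq_zero_of_lt (n := ℓ - r) (by omega)]
        simp
      · rfl
    · have hcast : (ℓ : ℤ) - r + m = ((ℓ + m - r : ℕ) : ℤ) := by simp at hr; omega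
      have hdvd (n : ℕ) : (2 : ℤ) ∣ n ↔ 2 ∣ n := by omega
      have hhalf (n : ℕ) : ((n : ℤ) / 2).toNat = n / 2 := by omega
      simp only [hcast, hdvd, hhalf]
  · have hdeg : (stepPoly ^ ℓ).natDegree < ℓ + m :=
      calc (stepPoly ^ ℓ).natDegree ≤ ℓ * 2 :=
          natDegree_pow_le_of_le ℓ (by rw [stepPoly]; compute_degree)
        _ < ℓ + m := by omega
    rw [amp, if_neg (by simpa using hm.not_ge), coeff_eq_zero_of_natDegree_lt hdeg]

theorem mul_derivative_pow {R : Type*} [CommSemiring R] (p : R[X]) (n : ℕ) :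
    p * derivative (p ^ n) = C (n : R) * derivative p * p ^ n := by
  cases n with
  | zero => simp
  | succ n => rw [derivative_pow_succ]; push_cast; ring

theorem coeff_X_sq_mul_derivative {R : Type*} [CommSemiring R] (p : R[X]) (k : ℕ) :
    (X ^ 2 * derivative p).coeff (k + 1) = k * p.coeff k := by
  cases k with
  | zero => simp [pow_two, mul_assoc]
  | succ k => rw [pow_two, mul_assoc, coeff_X_mul, coeff_X_mul, coeff_derivative]; push_cast; ring

theorem derivative_stepPoly : derivative stepPoly = C I * X + C (1 - I) := by
  simp only [stepPoly, derivative_add, derivative_C_mul_X_pow, derivative_C_mul_X, derivative_C]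
  norm_num

theorem coeff_stepPoly_pow_recurrence (ℓ k : ℕ) :
    ((k : ℂ) + 2) * (stepPoly ^ ℓ).coeff (k + 2) =
      (2 * ℓ - k) * (stepPoly ^ ℓ).coeff k +
        (2 + 2 * I) * ((k : ℂ) + 1 - ℓ) * (stepPoly ^ ℓ).coeff (k + 1) := by
  set p := stepPoly ^ ℓ
  have hL : stepPoly * derivative p =
      C (I / 2) * (X ^ 2 * derivative p) + C (1 - I) * (X * derivative p) +
        C (I / 2) * derivative p := by
    rw [stepPoly]; ring
  have hR : C (ℓ : ℂ) * derivative stepPoly * p = C (ℓ * I) * (X * p) + C (ℓ * (1 - I)) * p := by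
    rw [derivative_stepPoly, C_mul, C_mul]; ring
  have h : (stepPoly * derivative p).coeff (k + 1) =
      (C (ℓ : ℂ) * derivative stepPoly * p).coeff (k + 1) := by
    rw [mul_derivative_pow]
  simp only [hL, hR, coeff_add, coeff_C_mul, coeff_X_sq_mul_derivative, coeff_X_mul,
    coeff_derivative] at h
  push_cast at h
  linear_combination (-2 * I) * h + ((k + 2) * p.coeff (k + 2) + (k - 2 * ℓ) * p.coeff k -
    2 * (k + 1 - ℓ) * p.coeff (k + 1)) * I_sq

def AmpRecurrence (ℓ : ℕ) (a : ℕ → ℂ) : Prop :=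
  ∀ m : ℕ, ((ℓ : ℂ) + m + 2) * a (m + 2) =
    ((ℓ : ℂ) - m) * a m + (2 + 2 * I) * ((m : ℂ) + 1) * a (m + 1)

def adjProd (a : ℕ → ℂ) (m : ℕ) : ℂ := conj (a m) * a (m + 1)

section Recurrence

variable {ℓ : ℕ} {a : ℕ → ℂ}

theorem adjProd_succ_eq (hrec : AmpRecurrence ℓ a) (m : ℕ) :
    ((ℓ : ℂ) + m + 2) * adjProd a (m + 1) =
      ((ℓ : ℂ) - m) * conj (adjProd a m) + (2 + 2 * I) * ((m : ℂ) + 1) * normSq (a (m + 1)) := by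
  rw [adjProd, adjProd, map_mul, conj_conj, normSq_eq_conj_mul_self]
  linear_combination conj (a (m + 1)) * hrec m

theorem adjProd_succ_re (hrec : AmpRecurrence ℓ a) (m : ℕ) :
    ((ℓ : ℝ) + m + 2) * (adjProd a (m + 1)).re =
      ((ℓ : ℝ) - m) * (adjProd a m).re + 2 * ((m : ℝ) + 1) * normSq (a (m + 1)) := by
  simpa using congrArg re (adjProd_succ_eq hrec m)

theorem adjProd_succ_im (hrec : AmpRecurrence ℓ a) (m : ℕ) :
    ((ℓ : ℝ) + m + 2) * (adjProd a (m + 1)).im =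
      -(((ℓ : ℝ) - m) * (adjProd a m).im) + 2 * ((m : ℝ) + 1) * normSq (a (m + 1)) := by
  simpa using congrArg im (adjProd_succ_eq hrec m)

theorem abs_im_adjProd_le_neg_re (hrec : AmpRecurrence ℓ a) (hzero : ∀ m, ℓ < m → a m = 0)
    (m : ℕ) :
    |(adjProd a m).im| ≤ -(adjProd a m).re := by
  rcases le_or_gt ℓ m with hm | hm
  · simp [adjProd, hzero (m + 1) (by omega)]
  refine Nat.decreasingInduction (motive := fun m _ => |(adjProd a m).im| ≤ -(adjProd a m).re)
    (fun k hk ih => ?_) (by simp [adjProd, hzero (ℓ + 1) (by omega)]) hm.le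
  have hre := adjProd_succ_re hrec k
  have him := adjProd_succ_im hrec k
  have hk' : (k : ℝ) < ℓ := by exact_mod_cast hk
  have hN := normSq_nonneg (a (k + 1))
  rw [abs_le] at ih ⊢
  constructor <;> nlinarith

theorem sq_mul_normSq_add_two_eq (hrec : AmpRecurrence ℓ a) (j : ℕ) :
    ((ℓ : ℝ) + j + 2) ^ 2 * normSq (a (j + 2)) =
      ((ℓ : ℝ) - j) ^ 2 * normSq (a j) - 8 * ((j : ℝ) + 1) ^ 2 * normSq (a (j + 1)) +
        4 * ((j : ℝ) + 1) * ((ℓ : ℝ) + j + 2) *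
          ((adjProd a (j + 1)).re + (adjProd a (j + 1)).im) := by
  have hnorm := congrArg normSq (hrec j)
  have hre := adjProd_succ_re hrec j
  have him := adjProd_succ_im hrec j
  simp only [adjProd, normSq_apply, mul_re, mul_im, add_re, add_im, sub_re, sub_im, conj_re,
    conj_im, natCast_re, natCast_im, I_re, I_im, re_ofNat, im_ofNat, one_re, one_im]
    at hnorm hre him ⊢
  linear_combination hnorm - 4 * ((j : ℝ) + 1) * hre - 4 * ((j : ℝ) + 1) * him

theorem sq_mul_normSq_add_two_le (hrec : AmpRecurrence ℓ a) (hzero : ∀ m, ℓ < m → a m = 0)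
    (j : ℕ) : ((ℓ : ℝ) + j + 2) ^ 2 * normSq (a (j + 2)) ≤ ((ℓ : ℝ) - j) ^ 2 * normSq (a j) := by
  have hcone := abs_im_adjProd_le_neg_re hrec hzero (j + 1)
  have hcross : 4 * ((j : ℝ) + 1) * ((ℓ : ℝ) + j + 2) *
      ((adjProd a (j + 1)).re + (adjProd a (j + 1)).im) ≤ 0 :=
    mul_nonpos_of_nonneg_of_nonpos (by positivity)
      (by linarith [le_abs_self (adjProd a (j + 1)).im])
  have hN : 0 ≤ 8 * ((j : ℝ) + 1) ^ 2 * normSq (a (j + 1)) :=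
    mul_nonneg (by positivity) (normSq_nonneg _)
  rw [sq_mul_normSq_add_two_eq hrec j]
  linarith

end Recurrence

theorem amp_eq_zero_of_lt {ℓ m : ℕ} (h : ℓ < m) : amp ℓ m = 0 := by
  rw [amp, if_neg (by simpa using h.not_ge)]

theorem ampRecurrence_amp (ℓ : ℕ) : AmpRecurrence ℓ (fun m : ℕ => amp ℓ m) := by
  intro m
  have h := coeff_stepPoly_pow_recurrence ℓ (ℓ + m)
  simp only [amp_natCast, ← add_assoc]
  push_cast at h
  linear_combination h

theorem sub_sq_le_exp_mul_sq {x t : ℝ} (hx : 0 ≤ x) (hxt : x ≤ t) :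
    (t - x) ^ 2 ≤ Real.exp (-2 * x / t) * t ^ 2 := by
  rcases (hx.trans hxt).eq_or_lt with rfl | ht
  · simp [le_antisymm hxt hx]
  have hlin : t - x ≤ t * Real.exp (-x / t) :=
    calc t - x = t * (-x / t + 1) := by field_simp; ring
      _ ≤ t * Real.exp (-x / t) := mul_le_mul_of_nonneg_left (Real.add_one_le_exp _) ht.le
  calc (t - x) ^ 2 ≤ (t * Real.exp (-x / t)) ^ 2 := pow_le_pow_left₀ (by linarith) hlin 2
    _ = Real.exp (-2 * x / t) * t ^ 2 := by rw [mul_pow, sq (Real.exp _), ← Real.exp_add]; ring_nf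

theorem normSq_amp_add_two_le {ℓ j : ℕ} (hj : j ≤ ℓ) :
    normSq (amp ℓ (j + 2 : ℕ)) ≤ Real.exp (-2 * j / ℓ) * normSq (amp ℓ j) := by
  have hsq : (ℓ : ℝ) ^ 2 ≤ ((ℓ : ℝ) + j + 2) ^ 2 := by gcongr; linarith
  have hexp := sub_sq_le_exp_mul_sq (Nat.cast_nonneg j) (Nat.cast_le.2 hj : (j : ℝ) ≤ ℓ)
  refine le_of_mul_le_mul_left ?_ (by positivity : (0 : ℝ) < ((ℓ : ℝ) + j + 2) ^ 2)
  calc ((ℓ : ℝ) + j + 2) ^ 2 * normSq (amp ℓ (j + 2 : ℕ))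
      ≤ ((ℓ : ℝ) - j) ^ 2 * normSq (amp ℓ j) :=
        sq_mul_normSq_add_two_le (ampRecurrence_amp ℓ) (fun m => amp_eq_zero_of_lt) j
    _ ≤ Real.exp (-2 * j / ℓ) * ℓ ^ 2 * normSq (amp ℓ j) :=
        mul_le_mul_of_nonneg_right hexp (normSq_nonneg _)
    _ ≤ Real.exp (-2 * j / ℓ) * ((ℓ : ℝ) + j + 2) ^ 2 * normSq (amp ℓ j) := by
        gcongr
        exact normSq_nonneg _
    _ = ((ℓ : ℝ) + j + 2) ^ 2 * (Real.exp (-2 * j / ℓ) * normSq (amp ℓ j)) := by ring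

/-- Tail monotonicity: there is `ℓ₀ ≥ 1` such that for `ℓ ≥ ℓ₀` and `0 ≤ j ≤ ℓ − 2`,
`|μ_ℓ(j+2)|² ≤ e^{−2j/ℓ} |μ_ℓ(j)|²`; equivalently `P_ℓ(j+2) ≤ e^{−2j/ℓ} P_ℓ(j)`,
with `e^{−2j/ℓ} ≤ 1`. -/
theorem amp_tail_ratio :
    ∃ ℓ₀ : ℕ, 1 ≤ ℓ₀ ∧
      ∀ ℓ : ℕ, ℓ₀ ≤ ℓ → ∀ j : ℕ, j + 2 ≤ ℓ →
        ‖amp ℓ ((j : ℤ) + 2)‖ ^ 2 ≤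
            Real.exp (-2 * (j : ℝ) / ℓ) * ‖amp ℓ (j : ℤ)‖ ^ 2 ∧
          Pcoup ℓ ((j : ℤ) + 2) ≤ Real.exp (-2 * (j : ℝ) / ℓ) * Pcoup ℓ (j : ℤ) ∧
          Real.exp (-2 * (j : ℝ) / ℓ) ≤ 1 := by
  refine ⟨1, le_rfl, fun ℓ _ j hj => ?_⟩
  have hamp : ‖amp ℓ ((j : ℤ) + 2)‖ ^ 2 ≤
      Real.exp (-2 * (j : ℝ) / ℓ) * ‖amp ℓ (j : ℤ)‖ ^ 2 := by
    simpa only [Complex.sq_norm, Nat.cast_add, Nat.cast_ofNat] using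
      normSq_amp_add_two_le (by omega : j ≤ ℓ)
  have hexp : -2 * (j : ℝ) / ℓ ≤ 0 :=
    div_nonpos_of_nonpos_of_nonneg (by linarith [j.cast_nonneg (α := ℝ)]) ℓ.cast_nonneg
  refine ⟨hamp, ?_, Real.exp_le_one_iff.2 hexp⟩
  rw [Pcoup, Pcoup, ← mul_div_assoc]
  exact div_le_div_of_nonneg_right hamp (sum_nonneg fun _ _ => by positivity)
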